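/- arXiv:2109.05690 — 4 statements merged into one kernel-verified Lean document; each statement's English description precedes it below -/
import Mathlib

section
/- One-step inexact descent estimate: Under the standing assumptions, let y ∈ int dom φ ∩ X, λ ≥ 0, η ≥ 0, μ ≥ 0, ν ≥ 0, and let (x*, x̃*) be a pair with x* ∈ X ∩ int dom φ, x̃* ∈ dom P ∩ dom φ, such that there exists Δ ∈ ∂_ν P(x̃*) + ∇f(y) + λ(∇φ(x*) − ∇φ(y)) with ‖Δ‖ ≤ η and D_φ(x̃*, x*) ≤ μ. Then for every x ∈ dom P ∩ dom φ one has F(x̃*) − F(x) ≤ λ·D_φ(x,y) − λ·D_φ(x,x*) − (λ−L)·D_φ(x̃*,y) + η·‖x̃* − x‖ + λμ + ν. -/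
/-!
Add three inequalities: the `ν`-subgradient inequality for `P` at `x̃*` tested at `x`, the
gradient inequality for the convex `f` at `y` tested at `x`, and the relative-smoothness bound
for `f` between `y` and `x̃*`. The gradients of `f` combine with the subgradient into the
residual `Δ`, which Cauchy–Schwarz bounds by `η‖x̃* − x‖`; what remains is
`λ⟪∇φ(x*) − ∇φ(y), x̃* − x⟫`, which the four-point identity for Bregman distances turns into
`λ(D(x, x*) − D(x, y) + D(x̃*, y) − D(x̃*, x*))`, and `D(x̃*, x*) ≤ μ`.
-/

open Filter Topology RealInnerProductSpace

/-- The Bregman distance associated with the kernel `φ` whose gradient map is `gφ`. -/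
noncomputable def breg {E : Type*} [NormedAddCommGroup E] [InnerProductSpace ℝ E]
    (φ : E → ℝ) (gφ : E → E) (x y : E) : ℝ :=
  φ x - φ y - ⟪gφ y, x - y⟫

/-- The ν-subdifferential of `P` (a proper function with effective domain `domP`) at `x`. -/
def nuSubdiff {E : Type*} [NormedAddCommGroup E] [InnerProductSpace ℝ E]
    (P : E → ℝ) (domP : Set E) (ν : ℝ) (x : E) : Set E :=
  {d : E | ∀ u ∈ domP, P x + ⟪d, u - x⟫ - ν ≤ P u}

open Classical in
/-- Extension of a real-valued function with effective domain `dom` to an `EReal`-valued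
function taking the value `⊤` outside `dom`. -/
noncomputable def extFun {E : Type*} (g : E → ℝ) (dom : Set E) : E → EReal :=
  fun x => if x ∈ dom then (g x : EReal) else ⊤

/-- `φ` (with effective domain `domφ` and gradient map `gφ`) is essentially smooth. -/
def EssentiallySmooth {E : Type*} [NormedAddCommGroup E] [InnerProductSpace ℝ E]
    [FiniteDimensional ℝ E] (φ : E → ℝ) (domφ : Set E) (gφ : E → E) : Prop :=
  (interior domφ).Nonempty ∧
  (∀ x ∈ interior domφ, HasGradientAt φ (gφ x) x) ∧
  ∀ (u : ℕ → E) (u₀ : E), (∀ n, u n ∈ interior domφ) →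
    Tendsto u atTop (𝓝 u₀) → u₀ ∈ frontier (interior domφ) →
    Tendsto (fun n => ‖gφ (u n)‖) atTop atTop

/-- The standing assumptions (Assumption A) for the problem `inf {P x + f x : x ∈ Q}`. -/
structure Standing {E : Type*} [NormedAddCommGroup E] [InnerProductSpace ℝ E]
    [FiniteDimensional ℝ E] (Q domφ domP domf X : Set E)
    (φ P f : E → ℝ) (gφ gf : E → E) (L : ℝ) : Prop where
  hQclosed : IsClosed Q
  hQconv : Convex ℝ Q
  hQint : (interior Q).Nonempty
  hφconv : ConvexOn ℝ domφ φ
  hφstrict : StrictConvexOn ℝ (interior domφ) φ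
  hφsmooth : EssentiallySmooth φ domφ gφ
  hφQ : closure domφ = Q
  hPne : domP.Nonempty
  hPconv : ConvexOn ℝ domP P
  hPclosed : LowerSemicontinuous (extFun P domP)
  hPQ : (domP ∩ interior Q).Nonempty
  hfconv : ConvexOn ℝ domf f
  hfclosed : LowerSemicontinuous (extFun f domf)
  hfdom : domφ ⊆ domf
  hfgrad : ∀ x ∈ interior domφ, HasGradientAt f (gf x) x
  hXclosed : IsClosed X
  hXconv : Convex ℝ X
  hXsup : domP ∩ domφ ⊆ X
  hLnn : 0 ≤ L
  hrel : ∀ u ∈ interior domφ ∩ X, ∀ v ∈ domφ ∩ X,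
    f v ≤ f u + ⟪gf u, v - u⟫ + L * breg φ gφ v u

/-- The iBPG iterates with inexactness tolerance sequences `η`, `μ`, `ν`. -/
structure IBPGIter {E : Type*} [NormedAddCommGroup E] [InnerProductSpace ℝ E]
    [FiniteDimensional ℝ E] (domφ domP X : Set E) (φ P : E → ℝ) (gφ gf : E → E) (L : ℝ)
    (η μ ν : ℕ → ℝ) (x xt : ℕ → E) : Prop where
  hη : ∀ k, 0 ≤ η k
  hμ : ∀ k, 0 ≤ μ k
  hν : ∀ k, 0 ≤ ν k
  hx : ∀ k, x k ∈ X ∩ interior domφ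
  hxt : ∀ k, xt k ∈ domP ∩ domφ
  hinex : ∀ k, ∃ d ∈ nuSubdiff P domP (ν k) (xt (k+1)),
    ‖d + gf (x k) + L • (gφ (x (k+1)) - gφ (x k))‖ ≤ η k
  hdist : ∀ k, breg φ gφ (xt (k+1)) (x (k+1)) ≤ μ k

theorem ConvexOn.add_inner_sub_le_of_hasGradientAt {E : Type*} [NormedAddCommGroup E]
    [InnerProductSpace ℝ E] [CompleteSpace E] {s : Set E} {f : E → ℝ} (hf : ConvexOn ℝ s f)
    {x y g : E} (hg : HasGradientAt f g y) (hy : y ∈ s) (hx : x ∈ s) :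
    f y + ⟪g, x - y⟫ ≤ f x := by
  set ℓ : ℝ →ᵃ[ℝ] E := AffineMap.lineMap y x
  have hℓ0 : ℓ 0 = y := AffineMap.lineMap_apply_zero y x
  have hℓ1 : ℓ 1 = x := AffineMap.lineMap_apply_one y x
  have hline : ConvexOn ℝ (ℓ ⁻¹' s) (f ∘ ℓ) := hf.comp_affineMap ℓ
  have hderiv : HasDerivAt (f ∘ ℓ) ⟪g, x - y⟫ 0 := by
    rw [← hℓ0] at hg
    simpa [ℓ] using hg.hasFDerivAt.comp_hasDerivAt (0 : ℝ) AffineMap.hasDerivAt_lineMap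
  have hslope := hline.le_slope_of_hasDerivAt (by simpa [hℓ0]) (by simpa [hℓ1]) one_pos hderiv
  rw [slope_def_field, Function.comp_apply, Function.comp_apply, hℓ0, hℓ1, sub_zero,
    div_one] at hslope
  linarith

section

variable {E : Type*} [NormedAddCommGroup E] [InnerProductSpace ℝ E]

theorem inner_sub_gradient_eq_breg (φ : E → ℝ) (gφ : E → E) (x y z w : E) :
    ⟪gφ z - gφ y, w - x⟫ = breg φ gφ x z - breg φ gφ x y + breg φ gφ w y - breg φ gφ w z := by
  simp only [breg, inner_sub_left, inner_sub_right]
  ring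

theorem sub_le_inner_add_of_mem_nuSubdiff {P : E → ℝ} {domP : Set E} {ν : ℝ} {x u d : E}
    (hd : d ∈ nuSubdiff P domP ν x) (hu : u ∈ domP) :
    P x - P u ≤ ⟪d, x - u⟫ + ν := by
  have := hd u hu
  rw [← neg_sub x u, inner_neg_right] at this
  linarith

end

theorem one_step_inexact_descent_general
    {E : Type*} [NormedAddCommGroup E] [InnerProductSpace ℝ E] [FiniteDimensional ℝ E]
    (Q domφ domP domf X : Set E) (φ P f : E → ℝ) (gφ gf : E → E) (L : ℝ)
    (hstand : Standing Q domφ domP domf X φ P f gφ gf L)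
    (y : E) (hy : y ∈ interior domφ ∩ X)
    (lam η μ ν : ℝ) (hlam : 0 ≤ lam)
    (xs xts : E) (hxts : xts ∈ domP ∩ domφ)
    (hinex : ∃ d ∈ nuSubdiff P domP ν xts, ‖d + gf y + lam • (gφ xs - gφ y)‖ ≤ η)
    (hdist : breg φ gφ xts xs ≤ μ) :
    ∀ x ∈ domP ∩ domφ,
      (P xts + f xts) - (P x + f x) ≤
        lam * breg φ gφ x y - lam * breg φ gφ x xs - (lam - L) * breg φ gφ xts y
          + η * ‖xts - x‖ + lam * μ + ν := by
  intro x hx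
  obtain ⟨d, hd, hΔ⟩ := hinex
  have hP : P xts - P x ≤ ⟪d, xts - x⟫ + ν := sub_le_inner_add_of_mem_nuSubdiff hd hx.1
  have hf_below : f y + ⟪gf y, x - y⟫ ≤ f x :=
    hstand.hfconv.add_inner_sub_le_of_hasGradientAt (hstand.hfgrad y hy.1)
      (hstand.hfdom (interior_subset hy.1)) (hstand.hfdom hx.2)
  have hf_above : f xts ≤ f y + ⟪gf y, xts - y⟫ + L * breg φ gφ xts y :=
    hstand.hrel y hy xts ⟨hxts.2, hstand.hXsup hxts⟩
  have hΔ_inner : ⟪d + gf y + lam • (gφ xs - gφ y), xts - x⟫ ≤ η * ‖xts - x‖ :=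
    (real_inner_le_norm _ _).trans (mul_le_mul_of_nonneg_right hΔ (norm_nonneg _))
  have hsplit : ⟪d + gf y + lam • (gφ xs - gφ y), xts - x⟫ = ⟪d, xts - x⟫
      + (⟪gf y, xts - y⟫ - ⟪gf y, x - y⟫) + lam * ⟪gφ xs - gφ y, xts - x⟫ := by
    rw [← inner_sub_right, sub_sub_sub_cancel_right, inner_add_left, inner_add_left,
      real_inner_smul_left]
  have hbreg := congrArg (lam * ·) (inner_sub_gradient_eq_breg φ gφ x y xs xts)
  have hμ_term : lam * breg φ gφ xts xs ≤ lam * μ := mul_le_mul_of_nonneg_left hdist hlam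
  linarith

/-- **One-step inexact descent estimate** (Lemma 2.4). Under the standing assumptions, if
`y ∈ int dom φ ∩ X`, `λ, η, μ, ν ≥ 0`, and `(x*, x̃*)` is a pair of approximate solutions with
`x* ∈ X ∩ int dom φ`, `x̃* ∈ dom P ∩ dom φ`, such that some
`Δ ∈ ∂_ν P(x̃*) + ∇f(y) + λ(∇φ(x*) − ∇φ(y))` satisfies `‖Δ‖ ≤ η`, and `D_φ(x̃*, x*) ≤ μ`, then
for every `x ∈ dom P ∩ dom φ`,
`F(x̃*) − F(x) ≤ λ D_φ(x,y) − λ D_φ(x,x*) − (λ−L) D_φ(x̃*,y) + η‖x̃* − x‖ + λμ + ν`,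
where `F = P + f`. -/
theorem one_step_inexact_descent
    {E : Type*} [NormedAddCommGroup E] [InnerProductSpace ℝ E] [FiniteDimensional ℝ E]
    (Q domφ domP domf X : Set E) (φ P f : E → ℝ) (gφ gf : E → E) (L : ℝ)
    (hstand : Standing Q domφ domP domf X φ P f gφ gf L)
    (y : E) (hy : y ∈ interior domφ ∩ X)
    (lam η μ ν : ℝ) (hlam : 0 ≤ lam) (hη : 0 ≤ η) (hμ : 0 ≤ μ) (hν : 0 ≤ ν)
    (xs xts : E) (hxs : xs ∈ X ∩ interior domφ) (hxts : xts ∈ domP ∩ domφ)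
    (hinex : ∃ d ∈ nuSubdiff P domP ν xts, ‖d + gf y + lam • (gφ xs - gφ y)‖ ≤ η)
    (hdist : breg φ gφ xts xs ≤ μ) :
    ∀ x ∈ domP ∩ domφ,
      (P xts + f xts) - (P x + f x) ≤
        lam * breg φ gφ x y - lam * breg φ gφ x xs - (lam - L) * breg φ gφ xts y
          + η * ‖xts - x‖ + lam * μ + ν :=
  one_step_inexact_descent_general Q domφ domP domf X φ P f gφ gf L hstand y hy lam η μ ν hlam xs
    xts hxts hinex hdist
end

section
/- Sufficient-descent property of iBPG: under the standing assumptions, for the iBPG iterates and any k ≥ 0 and any x ∈ dom P ∩ dom φ, F(x̃^{k+1}) − F(x) ≤ L·D_φ(x, x^k) − L·D_φ(x, x^{k+1}) + η_k·‖x̃^{k+1} − x‖ + L·μ_k + ν_k. -/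
open Filter Topology RealInnerProductSpace

section Aux
variable {E : Type*} [NormedAddCommGroup E] [InnerProductSpace ℝ E]

/-- Gradient inequality for a convex function. -/
lemma convexOn_grad_ineq [CompleteSpace E] {s : Set E} {f : E → ℝ} (hf : ConvexOn ℝ s f)
    {a g : E} (ha : a ∈ s) (hg : HasGradientAt f g a) {z : E} (hz : z ∈ s) :
    f a + ⟪g, z - a⟫ ≤ f z := by
  set v := z - a with hv
  have hline : HasDerivAt (fun t : ℝ => a + t • v) v 0 :=
    ((hasDerivAt_id (0:ℝ)).smul_const v).const_add a |>.congr_deriv (by simp)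
  have hF : HasFDerivAt f (InnerProductSpace.toDual ℝ E g) a := hg.hasFDerivAt
  have hcomp : HasDerivAt (fun t : ℝ => f (a + t • v)) ⟪g, v⟫ 0 := by
    have hF' : HasFDerivAt f (InnerProductSpace.toDual ℝ E g) ((0:ℝ) • v + a) := by
      simpa using hF
    have := hF'.comp_hasDerivAt (x := (0:ℝ))
      (((hasDerivAt_id (0:ℝ)).smul_const v).add_const a)
    simp only [InnerProductSpace.toDual_apply_apply] at this
    refine this.congr_of_eventuallyEq ?_ |>.congr_deriv (by simp)
    filter_upwards with t
    simp [add_comm]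
  have hslope : Filter.Tendsto (slope (fun t : ℝ => f (a + t • v)) 0) (nhdsWithin 0 {(0:ℝ)}ᶜ)
      (nhds ⟪g, v⟫) := hasDerivAt_iff_tendsto_slope.mp hcomp
  have hslope' : Filter.Tendsto (slope (fun t : ℝ => f (a + t • v)) 0)
      (nhdsWithin 0 (Set.Ioi (0:ℝ))) (nhds ⟪g, v⟫) :=
    hslope.mono_left (nhdsWithin_mono _ (fun t ht => ne_of_gt ht))
  have hbound : ∀ᶠ t in nhdsWithin (0:ℝ) (Set.Ioi 0),
      slope (fun t : ℝ => f (a + t • v)) 0 t ≤ f z - f a := by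
    filter_upwards [Ioo_mem_nhdsGT_of_mem (by norm_num : (0:ℝ) ∈ Set.Ico 0 1)] with t ht
    have ht0 : 0 < t := ht.1
    have ht1 : t < 1 := ht.2
    have hconv := hf.2 ha hz (by linarith : (0:ℝ) ≤ 1 - t) ht0.le (by ring)
    have heq : a + t • v = (1 - t) • a + t • z := by
      rw [hv]; module
    rw [slope_def_field]
    have : f (a + t • v) ≤ (1 - t) * f a + t * f z := by
      rw [heq]; simpa using hconv
    have h2 : f (a + t • v) - f (a + (0:ℝ) • v) ≤ t * (f z - f a) := by
      simp only [zero_smul, add_zero]; nlinarith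
    rw [sub_zero, div_le_iff₀ ht0]
    calc f (a + t • v) - f (a + (0:ℝ) • v) ≤ t * (f z - f a) := h2
      _ = (f z - f a) * t := by ring
  have := le_of_tendsto hslope' hbound
  linarith

lemma breg_four (φ : E → ℝ) (gφ : E → E) (a b y z : E) :
    breg φ gφ y b - breg φ gφ y a + breg φ gφ z a - breg φ gφ z b
      = ⟪gφ a - gφ b, y - z⟫ := by
  simp [breg, inner_sub_left, inner_sub_right]
  ring

end Aux

/-- **Sufficient-descent property of iBPG** (Lemma 3.1). Under the standing assumptions, for the
iBPG iterates, any `k ≥ 0` and any `x ∈ dom P ∩ dom φ`,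
`F(x̃^{k+1}) − F(x) ≤ L D_φ(x, x^k) − L D_φ(x, x^{k+1}) + η_k ‖x̃^{k+1} − x‖ + L μ_k + ν_k`,
where `F = P + f`. -/


theorem iBPG_sufficient_descent
    {E : Type*} [NormedAddCommGroup E] [InnerProductSpace ℝ E] [FiniteDimensional ℝ E]
    (Q domφ domP domf X : Set E) (φ P f : E → ℝ) (gφ gf : E → E) (L : ℝ)
    (hstand : Standing Q domφ domP domf X φ P f gφ gf L)
    (η μ ν : ℕ → ℝ) (x xt : ℕ → E)
    (hiter : IBPGIter domφ domP X φ P gφ gf L η μ ν x xt) :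
    ∀ (k : ℕ), ∀ xx ∈ domP ∩ domφ,
      (P (xt (k+1)) + f (xt (k+1))) - (P xx + f xx) ≤
        L * breg φ gφ xx (x k) - L * breg φ gφ xx (x (k+1))
          + η k * ‖xt (k+1) - xx‖ + L * μ k + ν k := by

  intro k xx hxx
  obtain ⟨d, hd, hΔ⟩ := hiter.hinex k
  set a := x k with ha
  set b := x (k+1) with hb
  set y := xt (k+1) with hy
  have hya : y ∈ domP ∩ domφ := hiter.hxt (k+1)
  have hxk : a ∈ X ∩ interior domφ := hiter.hx k
  have haφ : a ∈ domφ := interior_subset hxk.2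
  -- P inequality
  have h1 : P y + ⟪d, xx - y⟫ - ν k ≤ P xx := hd xx hxx.1
  -- gradient inequality for f at a
  have h2 : f a + ⟪gf a, xx - a⟫ ≤ f xx :=
    convexOn_grad_ineq hstand.hfconv (hstand.hfdom haφ) (hstand.hfgrad a hxk.2)
      (hstand.hfdom hxx.2)
  -- relative smoothness
  have h3 : f y ≤ f a + ⟪gf a, y - a⟫ + L * breg φ gφ y a :=
    hstand.hrel a ⟨hxk.2, hxk.1⟩ y ⟨hya.2, hstand.hXsup hya⟩
  -- Cauchy-Schwarz bound
  set Δ := d + gf a + L • (gφ b - gφ a) with hΔdef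
  have h4 : ⟪Δ, y - xx⟫ ≤ η k * ‖y - xx‖ := by
    calc ⟪Δ, y - xx⟫ ≤ ‖Δ‖ * ‖y - xx‖ := real_inner_le_norm _ _
      _ ≤ η k * ‖y - xx‖ := by
          exact mul_le_mul_of_nonneg_right hΔ (norm_nonneg _)
  have h5 : L * breg φ gφ y b ≤ L * μ k :=
    mul_le_mul_of_nonneg_left (hiter.hdist k) hstand.hLnn
  -- key algebraic identity
  have hE1 : ⟪d, y - xx⟫ + ⟪gf a, y - a⟫ - ⟪gf a, xx - a⟫
      = ⟪Δ, y - xx⟫ + L * (breg φ gφ y b - breg φ gφ y a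
          + breg φ gφ xx a - breg φ gφ xx b) := by
    rw [breg_four, hΔdef]
    simp [inner_add_left, inner_sub_left, inner_sub_right, real_inner_smul_left]
    ring
  have hdsym : ⟪d, xx - y⟫ = -⟪d, y - xx⟫ := by
    rw [← inner_neg_right]; congr 1; abel
  rw [hdsym] at h1
  linarith
end

section
/- Averaged-iterate bound for iBPG: under the standing assumptions, for the iBPG iterates, any k ≥ 0 and any x ∈ dom P ∩ dom φ, F( (1/(k+1))·Σ_{i=0}^{k} x̃^{i+1} ) − F(x) ≤ (1/(k+1))·( L·D_φ(x, x^0) + Σ_{i=0}^{k} ( η_i·‖x̃^{i+1}‖ + η_i·‖x‖ + L·μ_i + ν_i ) ). -/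
open Filter Topology RealInnerProductSpace

/-!
Per step, the `ν_i`-subgradient inequality for `P`, relative smoothness and convexity of `f`,
Cauchy–Schwarz on the inexactness term `Δ^i`, and the four-point identity of `D_φ` give
`F(x̃^{i+1}) − F(x) ≤ (error_i) + L (D_φ(x, x^i) − D_φ(x, x^{i+1}))`. Summing telescopes the
Bregman terms, the last of which is nonnegative by convexity of `φ`, and Jensen's inequality for
`F` bounds `F` at the average by the average of the `F(x̃^{i+1})`.
-/

open Finset

theorem ConvexOn.add_inner_gradient_le {E : Type*} [NormedAddCommGroup E]
    [InnerProductSpace ℝ E] [CompleteSpace E] {s : Set E} {g : E → ℝ} (hg : ConvexOn ℝ s g)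
    {x y G : E} (hx : x ∈ s) (hy : y ∈ s) (hG : HasGradientAt g G x) :
    g x + ⟪G, y - x⟫ ≤ g y := by
  have hline : ConvexOn ℝ ((AffineMap.lineMap x y : ℝ →ᵃ[ℝ] E) ⁻¹' s)
      (g ∘ AffineMap.lineMap x y) :=
    hg.comp_affineMap _
  have hderiv : HasDerivAt (g ∘ AffineMap.lineMap (k := ℝ) x y) ⟪G, y - x⟫ 0 := by
    simpa using hG.hasFDerivAt.comp_hasDerivAt_of_eq 0 AffineMap.hasDerivAt_lineMap
      (AffineMap.lineMap_apply_zero x y).symm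
  have hslope := hline.le_slope_of_hasDerivAt (x := 0) (y := 1) (by simpa) (by simpa)
    zero_lt_one hderiv
  simp only [slope_def_field, Function.comp_apply, AffineMap.lineMap_apply_zero,
    AffineMap.lineMap_apply_one, sub_zero, div_one] at hslope
  linarith

theorem ConvexOn.map_finset_average_le {E : Type*} [AddCommGroup E] [Module ℝ E] {s : Set E}
    {g : E → ℝ} (hg : ConvexOn ℝ s g) {ι : Type*} {t : Finset ι} (ht : t.Nonempty) {p : ι → E}
    (hp : ∀ i ∈ t, p i ∈ s) :
    g ((#t : ℝ)⁻¹ • ∑ i ∈ t, p i) ≤ (#t : ℝ)⁻¹ * ∑ i ∈ t, g (p i) := by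
  simpa [centerMass, nsmul_eq_mul, ht.card_pos] using
    hg.map_centerMass_le (w := fun _ => (1 : ℝ)) (fun _ _ => zero_le_one) (by simpa using ht)
      hp

theorem sum_range_le_add_of_le_add_sub {a b c : ℕ → ℝ} {n : ℕ}
    (h : ∀ i, a i ≤ c i + (b i - b (i + 1))) (hb : 0 ≤ b n) :
    ∑ i ∈ range n, a i ≤ b 0 + ∑ i ∈ range n, c i := by
  calc ∑ i ∈ range n, a i ≤ ∑ i ∈ range n, (c i + (b i - b (i + 1))) := sum_le_sum fun i _ => h i
    _ = ∑ i ∈ range n, c i + (b 0 - b n) := by rw [sum_add_distrib, sum_range_sub']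
    _ ≤ b 0 + ∑ i ∈ range n, c i := by linarith

section Bregman

variable {E : Type*} [NormedAddCommGroup E] [InnerProductSpace ℝ E] (φ : E → ℝ) (gφ : E → E)

theorem breg_four_point (u w y y' : E) :
    ⟪gφ y' - gφ y, u - w⟫ =
      breg φ gφ u y - breg φ gφ u y' - (breg φ gφ w y - breg φ gφ w y') := by
  simp only [breg, inner_sub_left, inner_sub_right]
  ring

theorem breg_nonneg [CompleteSpace E] {s : Set E} {x y : E} (hφ : ConvexOn ℝ s φ) (hx : x ∈ s)
    (hy : y ∈ s) (hgrad : HasGradientAt φ (gφ y) y) : 0 ≤ breg φ gφ x y := by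
  have := hφ.add_inner_gradient_le hy hx hgrad
  simp only [breg]
  linarith

end Bregman

section IBPG

variable {E : Type*} [NormedAddCommGroup E] [InnerProductSpace ℝ E] [FiniteDimensional ℝ E]
  {Q domφ domP domf X : Set E} {φ P f : E → ℝ} {gφ gf : E → E} {L : ℝ}

theorem Standing.sub_le_inner_add_breg (hs : Standing Q domφ domP domf X φ P f gφ gf L)
    {y z u : E} (hy : y ∈ X ∩ interior domφ) (hz : z ∈ domφ ∩ X) (hu : u ∈ domφ) :
    f z - f u ≤ ⟪gf y, z - u⟫ + L * breg φ gφ z y := by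
  have hupper := hs.hrel y ⟨hy.2, hy.1⟩ z hz
  have hlower := hs.hfconv.add_inner_gradient_le (hs.hfdom (interior_subset hy.2))
    (hs.hfdom hu) (hs.hfgrad y hy.2)
  have hsplit : ⟪gf y, z - u⟫ = ⟪gf y, z - y⟫ - ⟪gf y, u - y⟫ := by
    rw [← inner_sub_right, sub_sub_sub_cancel_right]
  linarith

theorem IBPGIter.objective_sub_le {η μ ν : ℕ → ℝ} {x xt : ℕ → E}
    (hs : Standing Q domφ domP domf X φ P f gφ gf L)
    (hit : IBPGIter domφ domP X φ P gφ gf L η μ ν x xt) (i : ℕ) {u : E}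
    (hu : u ∈ domP ∩ domφ) :
    P (xt (i + 1)) + f (xt (i + 1)) - (P u + f u) ≤
      η i * ‖xt (i + 1)‖ + η i * ‖u‖ + L * μ i + ν i +
        (L * breg φ gφ u (x i) - L * breg φ gφ u (x (i + 1))) := by
  obtain ⟨d, hd, hΔ⟩ := hit.hinex i
  set z := xt (i + 1)
  have hz := hit.hxt (i + 1)
  have hP : P z - P u ≤ ⟪d, z - u⟫ + ν i := by
    have hsub := hd u hu.1
    have hflip : ⟪d, z - u⟫ = -⟪d, u - z⟫ := by rw [← inner_neg_right, neg_sub]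
    linarith
  have hf := hs.sub_le_inner_add_breg (hit.hx i) ⟨hz.2, hs.hXsup hz⟩ hu.2
  have hinexact : ⟪d + gf (x i) + L • (gφ (x (i + 1)) - gφ (x i)), z - u⟫ ≤
      η i * ‖z‖ + η i * ‖u‖ := by
    calc _ ≤ ‖d + gf (x i) + L • (gφ (x (i + 1)) - gφ (x i))‖ * ‖z - u‖ :=
          real_inner_le_norm _ _
      _ ≤ η i * (‖z‖ + ‖u‖) := mul_le_mul hΔ (norm_sub_le _ _) (norm_nonneg _) (hit.hη i)
      _ = η i * ‖z‖ + η i * ‖u‖ := mul_add _ _ _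
  rw [inner_add_left, inner_add_left, real_inner_smul_left,
    breg_four_point φ gφ z u (x i) (x (i + 1))] at hinexact
  have hμ := mul_le_mul_of_nonneg_left (hit.hdist i) hs.hLnn
  linarith

end IBPG

/-- **Averaged-iterate bound for iBPG** (Theorem 3.1(i), first bound). Under the standing
assumptions, for the iBPG iterates, any `k ≥ 0` and any `x ∈ dom P ∩ dom φ`,
`F((1/(k+1)) Σ_{i=0}^k x̃^{i+1}) − F(x) ≤
  (1/(k+1)) (L D_φ(x, x^0) + Σ_{i=0}^k (η_i ‖x̃^{i+1}‖ + η_i ‖x‖ + L μ_i + ν_i))`,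
where `F = P + f`. -/
theorem iBPG_averaged_iterate_bound
    {E : Type*} [NormedAddCommGroup E] [InnerProductSpace ℝ E] [FiniteDimensional ℝ E]
    (Q domφ domP domf X : Set E) (φ P f : E → ℝ) (gφ gf : E → E) (L : ℝ)
    (hstand : Standing Q domφ domP domf X φ P f gφ gf L)
    (η μ ν : ℕ → ℝ) (x xt : ℕ → E)
    (hiter : IBPGIter domφ domP X φ P gφ gf L η μ ν x xt) :
    ∀ (k : ℕ), ∀ xx ∈ domP ∩ domφ,
      (P (((k : ℝ) + 1)⁻¹ • ∑ i ∈ Finset.range (k+1), xt (i+1))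
        + f (((k : ℝ) + 1)⁻¹ • ∑ i ∈ Finset.range (k+1), xt (i+1))) - (P xx + f xx) ≤
        ((k : ℝ) + 1)⁻¹ * (L * breg φ gφ xx (x 0)
          + ∑ i ∈ Finset.range (k+1), (η i * ‖xt (i+1)‖ + η i * ‖xx‖ + L * μ i + ν i)) := by
  intro k u hu
  have hF : ConvexOn ℝ (domP ∩ domφ) (fun v => P v + f v) :=
    (hstand.hPconv.subset Set.inter_subset_left (hstand.hPconv.1.inter hstand.hφconv.1)).add
      (hstand.hfconv.subset (fun _ hv => hstand.hfdom hv.2)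
        (hstand.hPconv.1.inter hstand.hφconv.1))
  have hjensen := hF.map_finset_average_le (nonempty_range_add_one (n := k))
    fun i _ => hiter.hxt (i + 1)
  have hxk := (hiter.hx (k + 1)).2
  have hsum := sum_range_le_add_of_le_add_sub (n := k + 1)
    (b := fun i => L * breg φ gφ u (x i)) (fun i => hiter.objective_sub_le hstand i hu)
    (mul_nonneg hstand.hLnn (breg_nonneg φ gφ hstand.hφconv hu.2 (interior_subset hxk)
      (hstand.hφsmooth.2.1 _ hxk)))
  rw [card_range, Nat.cast_add_one] at hjensen
  calc _ ≤ ((k : ℝ) + 1)⁻¹ * ∑ i ∈ range (k + 1), (P (xt (i + 1)) + f (xt (i + 1)))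
        - (P u + f u) := by linarith
    _ = ((k : ℝ) + 1)⁻¹ *
          ∑ i ∈ range (k + 1), (P (xt (i + 1)) + f (xt (i + 1)) - (P u + f u)) := by
        rw [sum_sub_distrib, sum_const, card_range, nsmul_eq_mul]
        field_simp
        push_cast
        ring
    _ ≤ _ := mul_le_mul_of_nonneg_left hsum (by positivity)
end

section
/- Let γ ≥ 1 and let {θ_k}_{k≥−1} ⊆ (0,1] with θ_{−1} = θ_0 = 1 satisfy, for all k ≥ 1, θ_k ≤ (α−1)/(k+α−1) for some α ≥ γ+1, and ϑ_k := θ_{k−1}^{−γ} − (1−θ_k)·θ_k^{−γ} ≥ 0. Then θ_k ≥ 1/(k+γ) for all k ≥ 0, and Σ_{i=0}^{k} ϑ_i ≤ 2 + (k+1+γ)^γ/γ for all k ≥ 0. -/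
/-! If `θ_{k+1} < 1/(c+1)` with `c = k + γ`, then `(1 - θ_{k+1}) θ_{k+1}^{-γ} > c (c+1)^{γ-1} ≥ c^γ`,
while `θ_k ≥ 1/c` gives `θ_k^{-γ} ≤ c^γ`; this contradicts `ϑ_{k+1} ≥ 0`, so the lower bound
propagates by induction. For the sum, `ϑ_i = (θ_{i-1}^{-γ} - θ_i^{-γ}) + θ_i^{1-γ}`: the first
part telescopes to at most `1`, and by the lower bound and Bernoulli's inequality
`θ_i^{1-γ} ≤ (i+γ)^{γ-1} ≤ ((i+1+γ)^γ - (i+γ)^γ)/γ`, which telescopes as well. -/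

open Finset Real

lemma mul_rpow_sub_one_le_rpow_add_one_sub_rpow {x γ : ℝ} (hx : 0 < x) (hγ : 1 ≤ γ) :
    γ * x ^ (γ - 1) ≤ (x + 1) ^ γ - x ^ γ := by
  have bernoulli : 1 + γ * x⁻¹ ≤ (1 + x⁻¹) ^ γ :=
    one_add_mul_self_le_rpow_one_add (by linarith [inv_pos.2 hx]) hγ
  have hxγ : 0 ≤ x ^ γ := rpow_nonneg hx.le γ
  have lhs : (1 + γ * x⁻¹) * x ^ γ = x ^ γ + γ * x ^ (γ - 1) := by
    rw [rpow_sub_one hx.ne']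
    field_simp
  have rhs : (1 + x⁻¹) ^ γ * x ^ γ = (x + 1) ^ γ := by
    rw [← mul_rpow (by positivity) hx.le]
    congr 1
    field_simp
  linarith [mul_le_mul_of_nonneg_right bernoulli hxγ]

lemma rpow_neg_le_rpow_of_one_div_le {t c p : ℝ} (ht : 0 < t) (hc : 0 < c) (hp : 0 ≤ p)
    (h : 1 / c ≤ t) : t ^ (-p) ≤ c ^ p := by
  rw [rpow_neg_eq_inv_rpow]
  refine rpow_le_rpow (inv_nonneg.2 ht.le) ?_ hp
  rwa [inv_le_comm₀ ht hc, ← one_div]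

lemma rpow_lt_one_sub_mul_rpow_neg {c t γ : ℝ} (hc : 0 < c) (hγ : 1 ≤ γ) (ht : 0 < t)
    (htc : t < 1 / (c + 1)) : c ^ γ < (1 - t) * t ^ (-γ) := by
  have hc1 : 0 < c + 1 := by linarith
  have hfrac : c / (c + 1) < 1 - t := by
    rw [show c / (c + 1) = 1 - 1 / (c + 1) by field_simp; ring]
    linarith
  have hpow : (c + 1) ^ γ < t ^ (-γ) := by
    rw [rpow_neg_eq_inv_rpow]
    refine rpow_lt_rpow hc1.le ?_ (by linarith)
    rwa [lt_inv_comm₀ hc1 ht, ← one_div]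
  calc c ^ γ = c * c ^ (γ - 1) := by rw [rpow_sub_one hc.ne']; field_simp
    _ ≤ c * (c + 1) ^ (γ - 1) := by
        gcongr
        linarith
    _ = c / (c + 1) * (c + 1) ^ γ := by rw [rpow_sub_one hc1.ne']; field_simp
    _ < (1 - t) * t ^ (-γ) := mul_lt_mul hfrac hpow.le (rpow_pos_of_pos hc1 γ)
      (by linarith [div_pos hc hc1])

/-- `ϑ_k`; at `k = 0` the truncated `k - 1` reads `θ_{-1}` as `θ_0`, which is harmless since
both are `1`. -/
noncomputable def inertialWeight (γ : ℝ) (θ : ℕ → ℝ) (k : ℕ) : ℝ :=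
  θ (k - 1) ^ (-γ) - (1 - θ k) * θ k ^ (-γ)

section InertialWeight

variable {γ : ℝ} {θ : ℕ → ℝ}

lemma one_div_add_le_of_inertialWeight_nonneg (hγ : 1 ≤ γ) (hpos : ∀ k, 0 < θ k)
    (h0 : θ 0 = 1) (hw : ∀ k, 1 ≤ k → 0 ≤ inertialWeight γ θ k) (k : ℕ) :
    1 / ((k : ℝ) + γ) ≤ θ k := by
  induction k with
  | zero => simpa [h0] using div_le_one_of_le₀ hγ (by linarith)
  | succ k ih =>
    have hc : 0 < (k : ℝ) + γ := by positivity
    by_contra! hlt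
    have hprev : θ k ^ (-γ) ≤ ((k : ℝ) + γ) ^ γ :=
      rpow_neg_le_rpow_of_one_div_le (hpos k) hc (by linarith) ih
    have hnext : ((k : ℝ) + γ) ^ γ < (1 - θ (k + 1)) * θ (k + 1) ^ (-γ) :=
      rpow_lt_one_sub_mul_rpow_neg hc hγ (hpos _) (by rwa [Nat.cast_succ, add_right_comm] at hlt)
    have := hw (k + 1) k.succ_pos
    simp only [inertialWeight, Nat.add_sub_cancel] at this
    linarith

lemma inertialWeight_eq (hpos : ∀ k, 0 < θ k) (k : ℕ) :
    inertialWeight γ θ k = (θ (k - 1) ^ (-γ) - θ k ^ (-γ)) + θ k ^ (1 - γ) := by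
  rw [inertialWeight, sub_eq_add_neg 1 γ, rpow_add (hpos k), rpow_one]
  ring

lemma sum_range_inertialWeight (hpos : ∀ k, 0 < θ k) (n : ℕ) :
    ∑ i ∈ range (n + 1), inertialWeight γ θ i
      = θ 0 ^ (-γ) - θ n ^ (-γ) + ∑ i ∈ range (n + 1), θ i ^ (1 - γ) := by
  simp only [inertialWeight_eq hpos, sum_add_distrib]
  congr 1
  exact sum_range_sub' (fun i => θ (i - 1) ^ (-γ)) (n + 1)

lemma sum_range_rpow_one_sub_le (hγ : 1 ≤ γ) (hpos : ∀ k, 0 < θ k)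
    (hlow : ∀ k : ℕ, 1 / ((k : ℝ) + γ) ≤ θ k) (n : ℕ) :
    ∑ i ∈ range n, θ i ^ (1 - γ) ≤ (((n : ℝ) + γ) ^ γ - γ ^ γ) / γ := by
  have hγ0 : 0 < γ := by linarith
  have hstep (i : ℕ) :
      θ i ^ (1 - γ) ≤ ((((i + 1 : ℕ) : ℝ) + γ) ^ γ - ((i : ℝ) + γ) ^ γ) / γ := by
    have hc : 0 < (i : ℝ) + γ := by positivity
    have hθ : θ i ^ (1 - γ) ≤ ((i : ℝ) + γ) ^ (γ - 1) := by
      rw [show 1 - γ = -(γ - 1) by ring]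
      exact rpow_neg_le_rpow_of_one_div_le (hpos i) hc (by linarith) (hlow i)
    have hincr := mul_rpow_sub_one_le_rpow_add_one_sub_rpow hc hγ
    rw [le_div_iff₀ hγ0]
    push_cast
    rw [show (i : ℝ) + 1 + γ = (i : ℝ) + γ + 1 by ring]
    nlinarith
  calc ∑ i ∈ range n, θ i ^ (1 - γ)
      ≤ ∑ i ∈ range n, ((((i + 1 : ℕ) : ℝ) + γ) ^ γ - ((i : ℝ) + γ) ^ γ) / γ :=
        sum_le_sum fun i _ => hstep i
    _ = (((n : ℝ) + γ) ^ γ - γ ^ γ) / γ := by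
        rw [← sum_div, sum_range_sub (fun i : ℕ => ((i : ℝ) + γ) ^ γ), Nat.cast_zero, zero_add]

end InertialWeight

theorem theta_seq_bounds_general
    (γ : ℝ) (hγ : 1 ≤ γ)
    (θ : ℕ → ℝ) (hθmem : ∀ k, θ k ∈ Set.Ioc (0:ℝ) 1) (hθ0 : θ 0 = 1)
    (hϑ : ∀ k : ℕ, 1 ≤ k → 0 ≤ (θ (k-1)) ^ (-γ) - (1 - θ k) * (θ k) ^ (-γ)) :
    (∀ k : ℕ, 1 / ((k : ℝ) + γ) ≤ θ k) ∧
      ∀ k : ℕ, ∑ i ∈ Finset.range (k+1), ((θ (i-1)) ^ (-γ) - (1 - θ i) * (θ i) ^ (-γ)) ≤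
        2 + ((k : ℝ) + 1 + γ) ^ γ / γ := by
  have hpos : ∀ k, 0 < θ k := fun k => (hθmem k).1
  have hlow := one_div_add_le_of_inertialWeight_nonneg hγ hpos hθ0 hϑ
  refine ⟨hlow, fun k => ?_⟩
  have hsum := sum_range_inertialWeight (γ := γ) hpos k
  have hpart := sum_range_rpow_one_sub_le hγ hpos hlow (k + 1)
  have hγγ : 0 ≤ γ ^ γ / γ := by positivity
  have hθk : 0 ≤ θ k ^ (-γ) := rpow_nonneg (hpos k).le _
  simp only [inertialWeight, hθ0, one_rpow] at hsum
  rw [hsum]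
  push_cast at hpart
  rw [sub_div] at hpart
  linarith

/-- **Bounds for the inertial parameter sequence** (Lemma 4.1). Let `γ ≥ 1` and let
`{θ_k}_{k ≥ −1} ⊆ (0,1]` with `θ_{−1} = θ_0 = 1` satisfy, for all `k ≥ 1`,
`θ_k ≤ (α−1)/(k+α−1)` for some `α ≥ γ+1`, and
`ϑ_k := θ_{k−1}^{−γ} − (1−θ_k)·θ_k^{−γ} ≥ 0`. Then `θ_k ≥ 1/(k+γ)` for all `k ≥ 0` and
`Σ_{i=0}^{k} ϑ_i ≤ 2 + (k+1+γ)^γ/γ` for all `k ≥ 0`.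
(The sequence is represented over `ℕ`; since `θ_{−1} = θ_0 = 1`, the term `θ (k-1)` with
truncated subtraction at `k = 0` correctly represents `θ_{−1}`, giving `ϑ_0 = 1`.) -/
theorem theta_seq_bounds
    (γ α : ℝ) (hγ : 1 ≤ γ) (hα : γ + 1 ≤ α)
    (θ : ℕ → ℝ) (hθmem : ∀ k, θ k ∈ Set.Ioc (0:ℝ) 1) (hθ0 : θ 0 = 1)
    (hθle : ∀ k : ℕ, 1 ≤ k → θ k ≤ (α - 1) / ((k : ℝ) + α - 1))
    (hϑ : ∀ k : ℕ, 1 ≤ k → 0 ≤ (θ (k-1)) ^ (-γ) - (1 - θ k) * (θ k) ^ (-γ)) :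
    (∀ k : ℕ, 1 / ((k : ℝ) + γ) ≤ θ k) ∧
      ∀ k : ℕ, ∑ i ∈ Finset.range (k+1), ((θ (i-1)) ^ (-γ) - (1 - θ i) * (θ i) ^ (-γ)) ≤
        2 + ((k : ℝ) + 1 + γ) ^ γ / γ :=
  theta_seq_bounds_general γ hγ θ hθmem hθ0 hϑ
end
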